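/- Let (V,d) be a finite metric space, p ≥ 1 a real number, and let F, F* ⊆ V be nonempty sets with |F| = |F*| = k. Suppose F is single-swap locally optimal for the ℓ_p objective, i.e., for every r ∈ F and f' ∈ V we have Φ_p((F \ {r}) ∪ {f'}) ≥ Φ_p(F). Then 0 ≤ Φ_p(F*)^p − 3·Φ_p(F)^p + 2·(2·Φ_p(F*) + Φ_p(F))^p. -/

import Mathlib

open Finset

/-! Swap each `g ∈ F*` in for a facility `r g ∈ F`, with `r` chosen so that no other point of
`F*` has `r g` as its nearest point in `F` and each point of `F` is closed at most twice (possible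
because `|F*| ≤ |F|`). In the swap `(r g, g)`, the clients of `g` in `F*` move to `g`, the clients
of `r g` reroute through their facility `g'` in `F*` to the point of `F` nearest `g'`, at cost at
most `d(j,F) + 2 d(j,F*)`, and everybody else stays put. Summing local optimality over the `k`
swaps gives `3 ∑ d(j,F)^p ≤ ∑ d(j,F*)^p + 2 ∑ (d(j,F) + 2 d(j,F*))^p`, and Minkowski's inequality
bounds the last sum by `(2 Φ_p(F*) + Φ_p(F))^p`. -/

/-- Distance from a client `j` to a nonempty facility set `F`: `min_{f ∈ F} d(j,f)`. -/
noncomputable def distSet {V : Type*} [MetricSpace V] (j : V) (F : Finset V)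
    (hF : F.Nonempty) : ℝ :=
  F.inf' hF fun f => dist j f

/-- The ℓ_p-norm cost of a nonempty facility set `F`:
`Φ_p(F) = (∑_{j ∈ V} d(j,F)^p)^{1/p}`. -/
noncomputable def phiP {V : Type*} [MetricSpace V] [Fintype V] (p : ℝ) (F : Finset V)
    (hF : F.Nonempty) : ℝ :=
  (∑ j : V, distSet j F hF ^ p) ^ (1 / p)

namespace Finset

variable {α β : Type*} [DecidableEq β]

theorem exists_mapsTo_card_fiber_le [Nonempty β] {s : Finset α} {t : Finset β} {n : ℕ}
    (h : #s ≤ n * #t) :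
    ∃ z : α → β, Set.MapsTo z s t ∧ ∀ b, #{a ∈ s | z a = b} ≤ n := by
  classical
  obtain ⟨e⟩ : Nonempty (s ↪ t × Fin n) :=
    Function.Embedding.nonempty_of_card_le (by simpa [mul_comm] using h)
  let z a : β := if ha : a ∈ s then (e ⟨a, ha⟩).1 else Classical.arbitrary β
  let slot a : ℕ := if ha : a ∈ s then (e ⟨a, ha⟩).2 else 0
  refine ⟨z, fun a ha => by simp [z, mem_coe.1 ha], fun b => ?_⟩
  calc #{a ∈ s | z a = b} ≤ #(range n) := by
        refine card_le_card_of_injOn slot (fun a ha => ?_) ?_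
        · simp [slot, (mem_filter.1 (mem_coe.1 ha)).1]
        intro a ha a' ha' hslot
        simp only [coe_filter, Set.mem_ofPred_eq] at ha ha'
        simp only [z, slot, dif_pos ha.1, dif_pos ha'.1] at ha hslot ha'
        have : e ⟨a, ha.1⟩ = e ⟨a', ha'.1⟩ :=
          Prod.ext (Subtype.ext (ha.2.trans ha'.2.symm)) (Fin.ext hslot)
        simpa using e.injective this
    _ = n := card_range n

theorem card_filter_exists_ne_le [DecidableEq α] {s : Finset α} {t : Finset β} {η : α → β}
    (hη : Set.MapsTo η s t) (hcard : #s ≤ #t) :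
    #{a ∈ s | ∃ a' ∈ s, a' ≠ a ∧ η a' = η a} ≤ 2 * #(t \ s.image η) := by
  set M := {a ∈ s | ∃ a' ∈ s, a' ≠ a ∧ η a' = η a}
  have hMs : M ⊆ s := filter_subset _ s
  have hfiber : 2 * #(M.image η) ≤ #M := by
    refine mul_card_image_le_card M 2 fun b hb => ?_
    obtain ⟨a, ha, rfl⟩ := mem_image.1 hb
    obtain ⟨a', ha', hne, heq⟩ := (mem_filter.1 ha).2
    have ha'M : a' ∈ M := mem_filter.2 ⟨ha', a, hMs ha, hne.symm, heq.symm⟩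
    calc 2 = #{a, a'} := (card_pair hne.symm).symm
      _ ≤ #{x ∈ M | η x = η a} := card_le_card <| by
        simp [insert_subset_iff, ha, ha'M, heq]
  have himage : #(s.image η) ≤ #(s \ M) + #(M.image η) := by
    calc #(s.image η) = #((s \ M).image η ∪ M.image η) := by
          rw [← image_union, sdiff_union_of_subset hMs]
      _ ≤ #((s \ M).image η) + #(M.image η) := card_union_le _ _
      _ ≤ #(s \ M) + #(M.image η) := by grw [card_image_le]
  have hsplit : #(s \ M) + #M = #s := card_sdiff_add_card_eq_card hMs
  have hZ : #(t \ s.image η) = #t - #(s.image η) :=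
    card_sdiff_of_subset (image_subset_iff.2 fun a ha => hη ha)
  omega

theorem exists_swap_pairing {s : Finset α} {t : Finset β} {η : α → β}
    (hη : Set.MapsTo η s t) (hcard : #s ≤ #t) :
    ∃ r : α → β, Set.MapsTo r s t ∧ (∀ a ∈ s, ∀ a' ∈ s, η a' = r a → a' = a) ∧
      ∀ b, #{a ∈ s | r a = b} ≤ 2 := by
  classical
  rcases s.eq_empty_or_nonempty with rfl | ⟨a₀, -⟩
  · exact ⟨η, by simp [Set.mapsTo_empty], by simp, by simp⟩
  have : Nonempty β := ⟨η a₀⟩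
  set M := {a ∈ s | ∃ a' ∈ s, a' ≠ a ∧ η a' = η a}
  -- `r` is `η` on singleton fibres of `η`, and spreads the other points of `s`, two at a time,
  -- over the points of `t` that `η` misses.
  obtain ⟨z, hzt, hzfiber⟩ := exists_mapsTo_card_fiber_le (card_filter_exists_ne_le hη hcard)
  have hz : ∀ a ∈ M, z a ∈ t ∧ ∀ a' ∈ s, η a' ≠ z a := fun a ha => by
    simpa using hzt ha
  have hlonely : ∀ a ∈ s, a ∉ M → ∀ a' ∈ s, η a' = η a → a' = a := by
    intro a ha haM a' ha' heq
    by_contra hne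
    exact haM (mem_filter.2 ⟨ha, a', ha', hne, heq⟩)
  refine ⟨fun a => if a ∈ M then z a else η a, fun a ha => ?_, fun a ha a' ha' h => ?_,
    fun b => ?_⟩
  · dsimp only
    split_ifs with haM
    exacts [(hz a haM).1, hη ha]
  · dsimp only at h
    split_ifs at h with haM
    exacts [absurd h ((hz a haM).2 a' ha'), hlonely a ha haM a' ha' h]
  by_cases hb : ∃ a ∈ s, η a = b
  · obtain ⟨a', ha', rfl⟩ := hb
    have hfiber_eq : ∀ a ∈ s, (if a ∈ M then z a else η a) = η a' → a = a' := by
      intro a ha h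
      split_ifs at h with haM
      exacts [absurd h.symm ((hz a haM).2 a' ha'), (hlonely a ha haM a' ha' h.symm).symm]
    refine le_trans (card_le_one.2 fun a₁ h₁ a₂ h₂ => ?_) one_le_two
    rw [mem_filter] at h₁ h₂
    rw [hfiber_eq a₁ h₁.1 h₁.2, hfiber_eq a₂ h₂.1 h₂.2]
  · push Not at hb
    calc #{a ∈ s | (if a ∈ M then z a else η a) = b} ≤ #{a ∈ M | z a = b} :=
          card_le_card fun a ha => by
            rw [mem_filter] at ha ⊢
            split_ifs at ha with haM
            exacts [⟨haM, ha.2⟩, absurd ha.2 (hb a ha.1)]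
      _ ≤ 2 := hzfiber b

end Finset

section Metric

variable {V : Type*} [MetricSpace V]

noncomputable def nearest (j : V) (F : Finset V) (hF : F.Nonempty) : V :=
  (F.exists_mem_eq_inf' hF (dist j)).choose

variable {j : V} {F G : Finset V} (hF : F.Nonempty) (hG : G.Nonempty)

theorem nearest_mem : nearest j F hF ∈ F :=
  (F.exists_mem_eq_inf' hF (dist j)).choose_spec.1

theorem dist_nearest : dist j (nearest j F hF) = distSet j F hF :=
  (F.exists_mem_eq_inf' hF (dist j)).choose_spec.2.symm

theorem distSet_le_dist {x : V} (hx : x ∈ F) : distSet j F hF ≤ dist j x :=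
  inf'_le _ hx

theorem distSet_nonneg : 0 ≤ distSet j F hF :=
  le_inf' hF _ fun _ _ => dist_nonneg

variable [DecidableEq V] {x g : V}

theorem distSet_swap_le_distSet (hx : nearest j F hF ≠ x) :
    distSet j (insert g (F.erase x)) (insert_nonempty _ _) ≤ distSet j F hF := by
  rw [← dist_nearest hF]
  exact distSet_le_dist _ (mem_insert_of_mem (mem_erase.2 ⟨hx, nearest_mem hF⟩))

theorem distSet_swap_le_reroute (hx : nearest (nearest j G hG) F hF ≠ x) :
    distSet j (insert g (F.erase x)) (insert_nonempty _ _) ≤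
      distSet j F hF + 2 * distSet j G hG := by
  set g' := nearest j G hG
  calc distSet j (insert g (F.erase x)) (insert_nonempty _ _)
      ≤ dist j (nearest g' F hF) :=
        distSet_le_dist _ (mem_insert_of_mem (mem_erase.2 ⟨hx, nearest_mem hF⟩))
    _ ≤ dist j g' + dist g' (nearest j F hF) := by
        grw [dist_triangle j g', dist_nearest hF, distSet_le_dist hF (nearest_mem hF)]
    _ ≤ dist j g' + (dist g' j + dist j (nearest j F hF)) := by grw [dist_triangle g' j]
    _ = distSet j F hF + 2 * distSet j G hG := by
        rw [dist_comm g' j, dist_nearest hF, dist_nearest hG]; ring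

theorem rpow_distSet_swap_le {p : ℝ} (hp : 0 ≤ p)
    (hx : nearest (nearest j G hG) F hF = x → nearest j G hG = g) :
    distSet j (insert g (F.erase x)) (insert_nonempty _ _) ^ p ≤ distSet j F hF ^ p +
      (if nearest j G hG = g then distSet j G hG ^ p - distSet j F hF ^ p else 0) +
      (if x = nearest j F hF then
        (distSet j F hF + 2 * distSet j G hG) ^ p - distSet j F hF ^ p else 0) := by
  have hd := distSet_nonneg (j := j) hF
  have hds := distSet_nonneg (j := j) hG
  have hswap := distSet_nonneg (j := j) (insert_nonempty g (F.erase x))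
  have hreroute : distSet j F hF ^ p ≤ (distSet j F hF + 2 * distSet j G hG) ^ p :=
    Real.rpow_le_rpow hd (by linarith) hp
  by_cases hg : nearest j G hG = g
  · have hle : distSet j (insert g (F.erase x)) (insert_nonempty _ _) ≤ distSet j G hG := by
      rw [← dist_nearest hG, hg]
      exact distSet_le_dist _ (mem_insert_self _ _)
    grw [hle, if_pos hg]
    split_ifs <;> linarith
  rw [if_neg hg, add_zero]
  split_ifs with hxj
  · grw [distSet_swap_le_reroute hF hG (mt hx hg)]
    linarith
  · grw [distSet_swap_le_distSet hF (Ne.symm hxj)]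
    linarith

theorem sum_rpow_distSet_swap_le {p : ℝ} (hp : 0 ≤ p) {r : V → V}
    (hr : ∀ g ∈ G, ∀ g' ∈ G, nearest g' F hF = r g → g' = g)
    (hfiber : ∀ x, #{g ∈ G | r g = x} ≤ 2) :
    ∑ g ∈ G, distSet j (insert g (F.erase (r g))) (insert_nonempty _ _) ^ p ≤
      (#G - 1) * distSet j F hF ^ p + distSet j G hG ^ p +
        2 * ((distSet j F hF + 2 * distSet j G hG) ^ p - distSet j F hF ^ p) := by
  set Δ := (distSet j F hF + 2 * distSet j G hG) ^ p - distSet j F hF ^ p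
  have hΔ : 0 ≤ Δ := sub_nonneg.2 <| Real.rpow_le_rpow (distSet_nonneg hF)
    (by linarith [distSet_nonneg (j := j) hG]) hp
  calc ∑ g ∈ G, distSet j (insert g (F.erase (r g))) (insert_nonempty _ _) ^ p
      ≤ ∑ g ∈ G, (distSet j F hF ^ p +
          (if nearest j G hG = g then distSet j G hG ^ p - distSet j F hF ^ p else 0) +
          (if r g = nearest j F hF then Δ else 0)) :=
        sum_le_sum fun g hg => rpow_distSet_swap_le hF hG hp (hr g hg _ (nearest_mem hG))
    _ = #G * distSet j F hF ^ p + (distSet j G hG ^ p - distSet j F hF ^ p) +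
          #{g ∈ G | r g = nearest j F hF} * Δ := by
        rw [sum_add_distrib, sum_add_distrib, sum_const, sum_ite_eq, if_pos (nearest_mem hG),
          ← sum_filter, sum_const, nsmul_eq_mul, nsmul_eq_mul]
    _ ≤ #G * distSet j F hF ^ p + (distSet j G hG ^ p - distSet j F hF ^ p) + 2 * Δ := by
        grw [hfiber]; norm_num
    _ = _ := by ring

end Metric

theorem Real.Lp_const_mul_of_nonneg {ι : Type*} (s : Finset ι) {g : ι → ℝ} {c p : ℝ} (hc : 0 ≤ c)
    (hg : ∀ i ∈ s, 0 ≤ g i) (hp : p ≠ 0) :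
    (∑ i ∈ s, (c * g i) ^ p) ^ (1 / p) = c * (∑ i ∈ s, g i ^ p) ^ (1 / p) := by
  rw [sum_congr rfl fun i hi => Real.mul_rpow hc (hg i hi), ← mul_sum,
    Real.mul_rpow (Real.rpow_nonneg hc p) (sum_nonneg fun i hi => Real.rpow_nonneg (hg i hi) p),
    ← Real.rpow_mul hc, mul_one_div_cancel hp, Real.rpow_one]

section Cost

variable {V : Type*} [MetricSpace V] [Fintype V] {F G : Finset V} (hF : F.Nonempty)
  (hG : G.Nonempty) {p : ℝ}

theorem phiP_nonneg : 0 ≤ phiP p F hF :=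
  Real.rpow_nonneg (sum_nonneg fun _ _ => Real.rpow_nonneg (distSet_nonneg hF) p) _

theorem phiP_rpow (hp : p ≠ 0) : phiP p F hF ^ p = ∑ j, distSet j F hF ^ p := by
  rw [phiP, ← Real.rpow_mul (sum_nonneg fun _ _ => Real.rpow_nonneg (distSet_nonneg hF) p),
    one_div_mul_cancel hp, Real.rpow_one]

theorem sum_rpow_distSet_add_two_mul_le (hp : 1 ≤ p) :
    ∑ j, (distSet j F hF + 2 * distSet j G hG) ^ p ≤ (2 * phiP p G hG + phiP p F hF) ^ p := by
  have hd : ∀ j ∈ (univ : Finset V), 0 ≤ distSet j F hF := fun _ _ => distSet_nonneg hF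
  have hds : ∀ j ∈ (univ : Finset V), 0 ≤ 2 * distSet j G hG :=
    fun _ _ => mul_nonneg zero_le_two (distSet_nonneg hG)
  rw [← Real.rpow_inv_le_iff_of_pos (sum_nonneg fun j hj => Real.rpow_nonneg
      (add_nonneg (hd j hj) (hds j hj)) p)
    (add_nonneg (mul_nonneg zero_le_two (phiP_nonneg hG)) (phiP_nonneg hF)) (by linarith),
    ← one_div]
  calc (∑ j, (distSet j F hF + 2 * distSet j G hG) ^ p) ^ (1 / p)
      ≤ phiP p F hF + (∑ j, (2 * distSet j G hG) ^ p) ^ (1 / p) :=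
        Real.Lp_add_le_of_nonneg _ hp hd hds
    _ = 2 * phiP p G hG + phiP p F hF := by
        rw [Real.Lp_const_mul_of_nonneg _ zero_le_two (fun _ _ => distSet_nonneg hG) (by linarith), phiP,
          phiP]
        ring

variable [DecidableEq V]

theorem sum_rpow_distSet_le_of_forall_swap (hp : 0 ≤ p) (hcard : #G ≤ #F)
    (hswap : ∀ x ∈ F, ∀ g, ∑ j, distSet j F hF ^ p ≤
      ∑ j, distSet j (insert g (F.erase x)) (insert_nonempty _ _) ^ p) :
    3 * ∑ j, distSet j F hF ^ p ≤
      ∑ j, distSet j G hG ^ p + 2 * ∑ j, (distSet j F hF + 2 * distSet j G hG) ^ p := by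
  obtain ⟨r, hrF, hr, hfiber⟩ :=
    exists_swap_pairing (η := fun g => nearest g F hF) (fun _ _ => nearest_mem hF) hcard
  have hsum : (#G : ℝ) * ∑ j, distSet j F hF ^ p ≤
      ∑ j, ((#G - 1) * distSet j F hF ^ p + distSet j G hG ^ p +
        2 * ((distSet j F hF + 2 * distSet j G hG) ^ p - distSet j F hF ^ p)) :=
    calc (#G : ℝ) * ∑ j, distSet j F hF ^ p = ∑ _g ∈ G, ∑ j, distSet j F hF ^ p := by
          rw [sum_const, nsmul_eq_mul]
      _ ≤ ∑ g ∈ G, ∑ j, distSet j (insert g (F.erase (r g))) (insert_nonempty _ _) ^ p :=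
          sum_le_sum fun g hg => hswap _ (hrF hg) g
      _ = ∑ j, ∑ g ∈ G, distSet j (insert g (F.erase (r g))) (insert_nonempty _ _) ^ p :=
          sum_comm
      _ ≤ _ := sum_le_sum fun _ _ => sum_rpow_distSet_swap_le hF hG hp hr hfiber
  simp only [sum_add_distrib, sum_sub_distrib, ← mul_sum] at hsum
  linarith

end Cost

/-- At a single-swap local optimum for the ℓ_p objective,
`0 ≤ Φ_p(F*)^p − 3·Φ_p(F)^p + 2·(2·Φ_p(F*) + Φ_p(F))^p`. -/
theorem lp_single_swap_inequality {V : Type*} [MetricSpace V] [Fintype V] [DecidableEq V]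
    (p : ℝ) (hp : 1 ≤ p) (k : ℕ)
    (F Fstar : Finset V) (hF : F.Nonempty) (hFstar : Fstar.Nonempty)
    (hcardF : F.card = k) (hcardFstar : Fstar.card = k)
    (hlocal : ∀ r ∈ F, ∀ f' : V,
      phiP p (insert f' (F.erase r)) (insert_nonempty _ _) ≥ phiP p F hF) :
    0 ≤ phiP p Fstar hFstar ^ p - 3 * phiP p F hF ^ p +
        2 * (2 * phiP p Fstar hFstar + phiP p F hF) ^ p := by
  have hp0 : 0 < p := zero_lt_one.trans_le hp
  have hswap : ∀ x ∈ F, ∀ g, ∑ j, distSet j F hF ^ p ≤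
      ∑ j, distSet j (insert g (F.erase x)) (insert_nonempty _ _) ^ p := fun x hx g => by
    rw [← phiP_rpow hF hp0.ne', ← phiP_rpow _ hp0.ne']
    exact Real.rpow_le_rpow (phiP_nonneg hF) (hlocal x hx g) hp0.le
  have hbound := sum_rpow_distSet_le_of_forall_swap hF hFstar hp0.le (by omega) hswap
  rw [phiP_rpow hF hp0.ne', phiP_rpow hFstar hp0.ne']
  linarith [sum_rpow_distSet_add_two_mul_le hF hFstar hp]
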